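/- At every pure Nash equilibrium of the four-player Prisoners' Dilemma, both persons actually defect: the actual action p of person P and the actual action q of person Q are both D. -/
import Mathlib


/-- A strategy: cooperate or defect. -/
inductive Strat | C | D
deriving DecidableEq

open Strat

/-- A person's actual action is `C` iff both internal players choose `C`. -/
def act (a b : Strat) : Strat := if a = C ∧ b = C then C else D

/-- Base payoff `u x y` for a person acting `x` against the other acting `y`. -/
def u : Strat → Strat → ℤ
  | C, C => 3
  | C, D => 1
  | D, C => 4
  | D, D => 2

/-- Payoff of the mercenary player Pm. -/
def payPm (pm pa qm qa : Strat) : ℤ := u (act pm pa) (act qm qa)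

/-- Payoff of the altruistic player Pa (guilt of 1 if Pa defects). -/
def payPa (pm pa qm qa : Strat) : ℤ :=
  u (act pm pa) (act qm qa) - (if pa = D then 1 else 0)

/-- Payoff of the mercenary player Qm. -/
def payQm (pm pa qm qa : Strat) : ℤ := u (act qm qa) (act pm pa)

/-- Payoff of the altruistic player Qa (guilt of 1 if Qa defects). -/
def payQa (pm pa qm qa : Strat) : ℤ :=
  u (act qm qa) (act pm pa) - (if qa = D then 1 else 0)

/-- `(pm, pa, qm, qa)` is a pure Nash equilibrium: no single player can
strictly increase their own payoff by unilaterally changing their strategy. -/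
def isNash (pm pa qm qa : Strat) : Prop :=
  (∀ pm' : Strat, payPm pm' pa qm qa ≤ payPm pm pa qm qa) ∧
  (∀ pa' : Strat, payPa pm pa' qm qa ≤ payPa pm pa qm qa) ∧
  (∀ qm' : Strat, payQm pm pa qm' qa ≤ payQm pm pa qm qa) ∧
  (∀ qa' : Strat, payQa pm pa qm qa' ≤ payQa pm pa qm qa)

theorem nash_both_defect (pm pa qm qa : Strat) (h : isNash pm pa qm qa) :
    act pm pa = Strat.D ∧ act qm qa = Strat.D := by
  obtain ⟨h1,h2,h3,h4⟩ := h
  have a1 := h1 C; have a2 := h1 D; have b1 := h2 C; have b2 := h2 D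
  have c1 := h3 C; have c2 := h3 D; have d1 := h4 C; have d2 := h4 D
  clear h1 h2 h3 h4
  cases pm <;> cases pa <;> cases qm <;> cases qa <;>
    simp_all [payPm, payPa, payQm, payQa, act, u]
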